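/- arXiv:1405.6289 — 2 statements merged into one kernel-verified Lean document; each statement's English description precedes it below -/
import Mathlib

section
/- Let F be a finite family of continuous self-maps of a complete metric space (X,d) that is eventually contracting. Then for every x ∈ X and every sequence (f_n)_{n∈ω} ∈ F^ω, the sequence (f_0 ∘ f_1 ∘ ⋯ ∘ f_n (x))_{n∈ω} is Cauchy and hence converges in X. -/
open Filter Topology ENNReal

/-- The set `F^n` of all compositions of `n` members of a family `F` of self-maps. -/
def comps {X : Type*} (F : Set (X → X)) : ℕ → Set (X → X)
  | 0 => {id}
  | n + 1 => Set.image2 (· ∘ ·) (comps F n) F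

/-- The oscillation of a family `G` of self-maps of a metric space. -/
noncomputable def oscFam {X : Type*} [MetricSpace X] (G : Set (X → X)) (t : ℝ≥0∞) : ℝ≥0∞ :=
  ⨆ g ∈ G, ⨆ (x : X) (y : X) (_ : edist x y ≤ t), edist (g x) (g y)

/-! Eventual contraction already bounds every orbit `F^{<ω}(x)` (writing `F^n` for `comps F n`):
if `F^j` has oscillation `≤ 1/(2N)` for all `j ≥ m` at the scale of one step `x ↦ f x`, and `F^N`
has oscillation `≤ 1/2` at scale `1`, then an induction in blocks of length `N` puts every point
of `F^{m+k}(x)` within distance `1` of the finite set `F^m(x)`. Given an orbit bound `B`, the points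
`(f_0 ∘ ⋯ ∘ f_{a-1})(x)` and `(f_0 ∘ ⋯ ∘ f_{a+k-1})(x)` are images under one member of `F^a` of two
points at distance `≤ B`, so their distance is at most the oscillation of `F^a` at scale `B`,
which tends to `0`. -/

open scoped NNReal

def EventuallyContracting {X : Type*} [MetricSpace X] (F : Set (X → X)) : Prop :=
  ∀ t : ℝ≥0∞, 0 < t → t ≠ ⊤ → Tendsto (fun n => oscFam (comps F n) t) atTop (𝓝 0)

/-- `partialComp g n = g 0 ∘ g 1 ∘ ⋯ ∘ g (n - 1)`. -/
def partialComp {X : Type*} (g : ℕ → X → X) (n : ℕ) : X → X :=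
  ((List.range n).map g).foldr (· ∘ ·) id

section

variable {X : Type*} {F : Set (X → X)} {g : ℕ → X → X}

theorem comps_add (F : Set (X → X)) (a b : ℕ) :
    comps F (a + b) = Set.image2 (· ∘ ·) (comps F a) (comps F b) := by
  induction b with
  | zero => simp [comps, Set.image2_singleton_right]
  | succ b ih =>
    rw [← add_assoc, comps, ih, comps]
    exact Set.image2_assoc fun _ _ _ => rfl

theorem comp_mem_comps {a b : ℕ} {H V : X → X} (hH : H ∈ comps F a) (hV : V ∈ comps F b) :
    H ∘ V ∈ comps F (a + b) :=
  comps_add F a b ▸ Set.mem_image2_of_mem hH hV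

theorem Set.Finite.comps (hF : F.Finite) (n : ℕ) : (comps F n).Finite := by
  induction n with
  | zero => exact Set.finite_singleton _
  | succ n ih => exact ih.image2 _ hF

theorem partialComp_succ (g : ℕ → X → X) (n : ℕ) :
    partialComp g (n + 1) = partialComp g n ∘ g n := by
  suffices ∀ (l : List (X → X)) (e : X → X), l.foldr (· ∘ ·) e = l.foldr (· ∘ ·) id ∘ e by
    rw [partialComp, List.range_succ, List.map_append, List.foldr_append, this]
    rfl
  intro l e
  induction l with
  | nil => rfl
  | cons a l ih => simp only [List.foldr_cons, ih]; rfl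

theorem partialComp_mem_comps (hg : ∀ n, g n ∈ F) (n : ℕ) : partialComp g n ∈ comps F n := by
  induction n with
  | zero => rfl
  | succ n ih => rw [partialComp_succ]; exact Set.mem_image2_of_mem ih (hg n)

theorem exists_partialComp_add_eq_comp (hg : ∀ n, g n ∈ F) (a k : ℕ) :
    ∃ W ∈ comps F k, partialComp g (a + k) = partialComp g a ∘ W := by
  induction k with
  | zero => exact ⟨id, rfl, rfl⟩
  | succ k ih =>
    obtain ⟨W, hW, hW'⟩ := ih
    refine ⟨W ∘ g (a + k), Set.mem_image2_of_mem hW (hg _), ?_⟩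
    rw [← add_assoc, partialComp_succ, hW']
    rfl

variable [MetricSpace X]

theorem edist_le_oscFam {G : Set (X → X)} {g : X → X} (hg : g ∈ G) {a b : X} {t : ℝ≥0∞}
    (hab : edist a b ≤ t) : edist (g a) (g b) ≤ oscFam G t :=
  le_iSup₂_of_le g hg <| le_iSup₂_of_le a b <| le_iSup_of_le hab le_rfl

theorem exists_edist_apply_le_of_finite {S : Set (X → X)} (hS : S.Finite) (x : X) :
    ∃ C : ℝ≥0, ∀ W ∈ S, edist (W x) x ≤ C := by
  obtain ⟨C, hC⟩ := (hS.image fun W => nndist (W x) x).bddAbove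
  exact ⟨C, fun W hW => by
    rw [edist_nndist, ENNReal.coe_le_coe]
    exact hC ⟨W, hW, rfl⟩⟩

theorem edist_comp_apply_le_of_oscFam_le {x : X} {t c : ℝ≥0∞} {m : ℕ}
    (hx : ∀ f ∈ F, edist (f x) x ≤ t) (hosc : ∀ j ≥ m, oscFam (comps F j) t ≤ c)
    {j : ℕ} (hj : m ≤ j) {H : X → X} (hH : H ∈ comps F j) :
    ∀ {k : ℕ} {V : X → X}, V ∈ comps F k → edist (H (V x)) (H x) ≤ k * c
  | 0, V, hV => by
    obtain rfl : V = id := hV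
    simp
  | k + 1, _, ⟨V, hV, f, hf, rfl⟩ => by
    have hstep : edist (H (V (f x))) (H (V x)) ≤ c :=
      (edist_le_oscFam (comp_mem_comps hH hV) (hx f hf)).trans (hosc _ (hj.trans le_self_add))
    calc edist (H (V (f x))) (H x)
        ≤ edist (H (V (f x))) (H (V x)) + edist (H (V x)) (H x) := edist_triangle _ _ _
      _ ≤ c + k * c := add_le_add hstep (edist_comp_apply_le_of_oscFam_le hx hosc hj hH hV)
      _ = ↑(k + 1) * c := by push_cast; ring

theorem exists_mem_comps_edist_le_one_of_le_inv_two {x : X} {m N : ℕ} (hN : 1 ≤ N)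
    (hoscN : oscFam (comps F N) 1 ≤ 2⁻¹)
    (hnear : ∀ k ≤ N, ∀ H ∈ comps F m, ∀ V ∈ comps F k, edist (H (V x)) (H x) ≤ 2⁻¹)
    (k : ℕ) : ∀ W ∈ comps F (m + k), ∃ H ∈ comps F m, edist (W x) (H x) ≤ 1 := by
  induction k using Nat.strong_induction_on with
  | _ k ih =>
    intro W hW
    rcases lt_or_ge k N with hk | hk
    · rw [comps_add] at hW
      obtain ⟨H, hH, V, hV, rfl⟩ := hW
      exact ⟨H, hH, (hnear k hk.le H hH V hV).trans (by norm_num)⟩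
    · rw [show m + k = N + (m + (k - N)) by omega, comps_add] at hW
      obtain ⟨U, hU, W₀, hW₀, rfl⟩ := hW
      obtain ⟨H₀, hH₀, hW₀H₀⟩ := ih (k - N) (by omega) W₀ hW₀
      -- `U ∘ H₀ ∈ F^{N+m} = F^m ∘ F^N`: the block `U` is moved to the inside.
      obtain ⟨H, hH, V, hV, hHV⟩ : U ∘ H₀ ∈ Set.image2 (· ∘ ·) (comps F m) (comps F N) := by
        rw [← comps_add, add_comm]
        exact comp_mem_comps hU hH₀
      refine ⟨H, hH, ?_⟩
      calc edist (U (W₀ x)) (H x)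
          ≤ edist (U (W₀ x)) (U (H₀ x)) + edist (H (V x)) (H x) := by
            rw [show H (V x) = U (H₀ x) from congrFun hHV x]
            exact edist_triangle _ _ _
        _ ≤ 2⁻¹ + 2⁻¹ :=
            add_le_add ((edist_le_oscFam hU hW₀H₀).trans hoscN) (hnear N le_rfl H hH V hV)
        _ = 1 := ENNReal.inv_two_add_inv_two

theorem EventuallyContracting.exists_mem_comps_edist_le_one (hF : EventuallyContracting F)
    (hfin : F.Finite) (x : X) :
    ∃ m, ∀ k, ∀ W ∈ comps F (m + k), ∃ H ∈ comps F m, edist (W x) (H x) ≤ 1 := by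
  obtain ⟨r, hr⟩ := exists_edist_apply_le_of_finite hfin x
  obtain ⟨N, hoscN, hN⟩ := ((hF 1 one_pos one_ne_top).eventually_le_const
    (by norm_num : (0 : ℝ≥0∞) < 2⁻¹) |>.and (eventually_ge_atTop 1)).exists
  set c : ℝ≥0∞ := 2⁻¹ / N
  have hc : 0 < c := ENNReal.div_pos_iff.2 ⟨by norm_num, natCast_ne_top N⟩
  have hNc : (N : ℝ≥0∞) * c = 2⁻¹ :=
    ENNReal.mul_div_cancel (Nat.cast_ne_zero.2 (by omega)) (natCast_ne_top N)
  obtain ⟨m, hm⟩ := eventually_atTop.1 <|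
    (hF (r + 1) (by positivity) (by simp)).eventually_le_const hc
  refine ⟨m, exists_mem_comps_edist_le_one_of_le_inv_two hN hoscN fun k hk H hH V hV => ?_⟩
  calc edist (H (V x)) (H x)
      ≤ k * c := edist_comp_apply_le_of_oscFam_le
          (fun f hf => (hr f hf).trans le_self_add) hm le_rfl hH hV
    _ ≤ N * c := by gcongr
    _ = 2⁻¹ := hNc

theorem EventuallyContracting.exists_edist_comps_apply_le (hF : EventuallyContracting F)
    (hfin : F.Finite) (x : X) : ∃ B : ℝ≥0, ∀ n, ∀ W ∈ comps F n, edist (W x) x ≤ B := by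
  obtain ⟨m, hm⟩ := hF.exists_mem_comps_edist_le_one hfin x
  obtain ⟨C, hC⟩ := exists_edist_apply_le_of_finite
    ((Set.finite_Iic m).biUnion fun j _ => hfin.comps j) x
  refine ⟨C + 1, fun n W hW => ?_⟩
  rcases le_or_gt n m with hn | hn
  · exact (hC W (Set.mem_biUnion hn hW)).trans (by simp)
  · obtain ⟨k, rfl⟩ := Nat.exists_eq_add_of_le hn.le
    obtain ⟨H, hH, hWH⟩ := hm k W hW
    calc edist (W x) x ≤ edist (W x) (H x) + edist (H x) x := edist_triangle _ _ _
      _ ≤ 1 + C := add_le_add hWH (hC H (Set.mem_biUnion (Set.mem_Iic.2 le_rfl) hH))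
      _ = ↑(C + 1) := by push_cast; ring

theorem edist_partialComp_add_apply_le (hg : ∀ n, g n ∈ F) {x : X} {B : ℝ≥0∞}
    (hB : ∀ n, ∀ W ∈ comps F n, edist (W x) x ≤ B) (a k : ℕ) :
    edist (partialComp g (a + k) x) (partialComp g a x) ≤ oscFam (comps F a) B := by
  obtain ⟨W, hW, hW'⟩ := exists_partialComp_add_eq_comp hg a k
  rw [hW']
  exact edist_le_oscFam (partialComp_mem_comps hg a) (hB k W hW)

theorem EventuallyContracting.cauchySeq_partialComp (hF : EventuallyContracting F)
    (hfin : F.Finite) (hg : ∀ n, g n ∈ F) (x : X) : CauchySeq fun n => partialComp g n x := by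
  obtain ⟨B, hB⟩ := hF.exists_edist_comps_apply_le hfin x
  rw [EMetric.cauchySeq_iff']
  intro ε hε
  obtain ⟨N, hN⟩ := eventually_atTop.1 <|
    (hF (B + 1) (by positivity) (by simp)).eventually_lt_const hε
  refine ⟨N, fun n hn => ?_⟩
  obtain ⟨k, rfl⟩ := Nat.exists_eq_add_of_le hn
  refine (edist_partialComp_add_apply_le hg (fun n W hW => ?_) N k).trans_lt (hN N le_rfl)
  exact (hB n W hW).trans (by simp)

end

theorem composition_sequence_cauchy_general {X : Type*} [MetricSpace X] [CompleteSpace X]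
    (F : Set (X → X)) (hfin : F.Finite)
    (hev : ∀ t : ℝ≥0∞, 0 < t → t ≠ ⊤ →
      Tendsto (fun n => oscFam (comps F n) t) atTop (𝓝 0))
    (x : X) (g : ℕ → X → X) (hg : ∀ n, g n ∈ F) :
    CauchySeq (fun n => ((List.range (n + 1)).map g).foldr (· ∘ ·) id x) ∧
      ∃ z : X, Tendsto (fun n => ((List.range (n + 1)).map g).foldr (· ∘ ·) id x)
        atTop (𝓝 z) := by
  have h : CauchySeq fun n => partialComp g (n + 1) x :=
    (EventuallyContracting.cauchySeq_partialComp hev hfin hg x).comp_tendsto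
      (tendsto_add_atTop_nat 1)
  exact ⟨h, cauchySeq_tendsto_of_complete h⟩

/-- If a finite family `F` of continuous self-maps of a complete metric space is eventually
contracting, then for every `x ∈ X` and every sequence `(f_n)` of members of `F`, the sequence
`(f_0 ∘ f_1 ∘ ⋯ ∘ f_n (x))` is Cauchy and hence converges. -/
theorem composition_sequence_cauchy {X : Type*} [MetricSpace X] [CompleteSpace X]
    (F : Set (X → X)) (hfin : F.Finite) (hcont : ∀ f ∈ F, Continuous f)
    (hev : ∀ t : ℝ≥0∞, 0 < t → t ≠ ⊤ →
      Tendsto (fun n => oscFam (comps F n) t) atTop (𝓝 0))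
    (x : X) (g : ℕ → X → X) (hg : ∀ n, g n ∈ F) :
    CauchySeq (fun n => ((List.range (n + 1)).map g).foldr (· ∘ ·) id x) ∧
      ∃ z : X, Tendsto (fun n => ((List.range (n + 1)).map g).foldr (· ∘ ·) id x)
        atTop (𝓝 z) :=
  composition_sequence_cauchy_general F hfin hev x g hg
end

section
/- Let (X,d) be a totally bounded bounded metric space and F a finite family of self-maps which is globally contracting: sup_{f ∈ F^{≥n}} diam_d(f(X)) → 0 as n → ∞. Then the pseudometric d̂(x,y) = sup_n max_{f∈F^n} α_n d(f(x),f(y)) (for a fixed increasing sequence 1 = α_0 ≤ α_n ≤ 2) is totally bounded. -/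
/-!
Fix `δ > 0` with `2δ < ε` and, by global contractivity, a level `k` beyond which every
`f ∈ F^n` maps `X` onto a set of diameter `< δ`; these levels contribute at most `2δ` to `d̂`
whatever the points. The finitely many maps of level `< k` are handled together by one finite
net: `x ↦ (f x)_f` takes values in a finite power of the totally bounded space `X`, which is
again totally bounded.
-/

open Filter Topology ENNReal

theorem totallyBounded_univ_pi {ι : Type*} {Y : ι → Type*} [∀ i, UniformSpace (Y i)]
    {s : ∀ i, Set (Y i)} (hs : ∀ i, TotallyBounded (s i)) :
    TotallyBounded (Set.univ.pi s) := by
  refine totallyBounded_iff_ultrafilter.mpr fun l hl => (cauchy_pi_iff' _).mpr fun i => ?_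
  refine totallyBounded_iff_ultrafilter.mp (hs i) (l.map (Function.eval i)) ?_
  exact (map_mono hl).trans <| by
    simpa only [map_principal] using principal_mono.mpr Set.eval_image_univ_pi_subset

theorem exists_finite_edist_lt_of_totallyBounded_range {X Y : Type*} [PseudoEMetricSpace Y]
    {g : X → Y} (hg : TotallyBounded (Set.range g)) {δ : ℝ≥0∞} (hδ : 0 < δ) :
    ∃ S : Set X, S.Finite ∧ ∀ x, ∃ y ∈ S, edist (g x) (g y) < δ := by
  obtain ⟨t, hts, htfin, hcov⟩ := EMetric.totallyBounded_iff'.mp hg δ hδ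
  obtain ⟨S, -, hSfin, hScov⟩ := Set.exists_subset_image_finite_and (s := Set.univ)
    (p := fun t => Set.range g ⊆ ⋃ y ∈ t, Metric.eball y δ) |>.mp
    ⟨t, Set.image_univ.symm ▸ hts, htfin, hcov⟩
  refine ⟨S, hSfin, fun x => ?_⟩
  obtain ⟨_, ⟨y, hyS, rfl⟩, hxy⟩ := Set.mem_iUnion₂.mp (hScov ⟨x, rfl⟩)
  exact ⟨y, hyS, Metric.mem_eball.mp hxy⟩

theorem exists_finite_forall_edist_lt {X Y : Type*} [PseudoEMetricSpace Y]
    (hY : TotallyBounded (Set.univ : Set Y)) {G : Set (X → Y)} (hG : G.Finite)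
    {δ : ℝ≥0∞} (hδ : 0 < δ) :
    ∃ S : Set X, S.Finite ∧ ∀ x, ∃ y ∈ S, ∀ f ∈ G, edist (f x) (f y) < δ := by
  have := hG.fintype
  have hrange : TotallyBounded (Set.range fun x (f : G) => f.1 x) :=
    (totallyBounded_univ_pi fun _ => hY).subset fun _ _ =>
      Set.mem_univ_pi.mpr fun _ => Set.mem_univ _
  obtain ⟨S, hSfin, hS⟩ := exists_finite_edist_lt_of_totallyBounded_range hrange hδ
  refine ⟨S, hSfin, fun x => ?_⟩
  obtain ⟨y, hyS, hxy⟩ := hS x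
  exact ⟨y, hyS, fun f hf => (edist_le_pi_edist _ _ ⟨f, hf⟩).trans_lt hxy⟩

theorem comps_finite {X : Type*} {F : Set (X → X)} (hF : F.Finite) : ∀ n, (comps F n).Finite
  | 0 => Set.finite_singleton id
  | n + 1 => (comps_finite hF n).image2 _ hF

noncomputable def tailDiam {X : Type*} [PseudoEMetricSpace X] (F : Set (X → X)) (k : ℕ) : ℝ≥0∞ :=
  ⨆ n, ⨆ (_ : k ≤ n), ⨆ f ∈ comps F n, Metric.ediam (f '' Set.univ)

theorem edist_le_tailDiam {X : Type*} [PseudoEMetricSpace X] {F : Set (X → X)} {k n : ℕ}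
    (hkn : k ≤ n) {f : X → X} (hf : f ∈ comps F n) (x y : X) :
    edist (f x) (f y) ≤ tailDiam F k :=
  (Metric.edist_le_ediam_of_mem (Set.mem_image_of_mem f (Set.mem_univ _))
    (Set.mem_image_of_mem f (Set.mem_univ _))).trans <| le_iSup_of_le n <| le_iSup_of_le hkn <|
      le_iSup₂_of_le f hf le_rfl

theorem dhat_totally_bounded_general {X : Type*} [MetricSpace X]
    (htb : TotallyBounded (Set.univ : Set X))
    (F : Set (X → X)) (hfin : F.Finite)
    (hgc : Tendsto
      (fun n => ⨆ m, ⨆ (_ : n ≤ m), ⨆ f ∈ comps F m, EMetric.diam (f '' (Set.univ : Set X)))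
      atTop (𝓝 0))
    (α : ℕ → ℝ≥0∞) (hα2 : ∀ n, α n ≤ 2) :
    let dhat : X → X → ℝ≥0∞ := fun x y => ⨆ n, ⨆ f ∈ comps F n, α n * edist (f x) (f y)
    ∀ ε : ℝ≥0∞, 0 < ε → ∃ S : Set X, S.Finite ∧ ∀ x : X, ∃ y ∈ S, dhat x y < ε := by
  intro dhat ε hε
  obtain ⟨δ, hδ, h2δ⟩ := ENNReal.exists_pos_mul_lt (b := ε) (a := 2) ofNat_ne_top hε.ne'
  have htail : Tendsto (tailDiam F) atTop (𝓝 0) := hgc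
  obtain ⟨k, hk⟩ := (htail.eventually_lt_const hδ).exists
  obtain ⟨S, hSfin, hS⟩ := exists_finite_forall_edist_lt htb
    ((Set.finite_lt_nat k).biUnion fun n _ => comps_finite hfin n) hδ
  refine ⟨S, hSfin, fun x => ?_⟩
  obtain ⟨y, hyS, hy⟩ := hS x
  refine ⟨y, hyS, (iSup_le fun n => iSup₂_le fun f hf => ?_).trans_lt h2δ⟩
  have hfxy : edist (f x) (f y) ≤ δ := by
    rcases lt_or_ge n k with hn | hn
    · exact (hy f (Set.mem_biUnion hn hf)).le
    · exact (edist_le_tailDiam hn hf x y).trans hk.le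
  calc α n * edist (f x) (f y) ≤ 2 * δ := mul_le_mul' (hα2 n) hfxy
    _ = δ * 2 := mul_comm _ _

/-- If `(X,d)` is a totally bounded bounded metric space and `F` is a globally contracting
finite family of self-maps, then the pseudometric
`d̂(x,y) = sup_n max_{f ∈ F^n} α_n · d(f x, f y)` is totally bounded. -/
theorem dhat_totally_bounded {X : Type*} [MetricSpace X]
    (hbd : EMetric.diam (Set.univ : Set X) ≠ ⊤)
    (htb : TotallyBounded (Set.univ : Set X))
    (F : Set (X → X)) (hfin : F.Finite)
    (hgc : Tendsto
      (fun n => ⨆ m, ⨆ (_ : n ≤ m), ⨆ f ∈ comps F m, EMetric.diam (f '' (Set.univ : Set X)))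
      atTop (𝓝 0))
    (α : ℕ → ℝ≥0∞) (hα0 : α 0 = 1) (hαmono : StrictMono α) (hα2 : ∀ n, α n ≤ 2) :
    let dhat : X → X → ℝ≥0∞ := fun x y => ⨆ n, ⨆ f ∈ comps F n, α n * edist (f x) (f y)
    ∀ ε : ℝ≥0∞, 0 < ε → ∃ S : Set X, S.Finite ∧ ∀ x : X, ∃ y ∈ S, dhat x y < ε :=
  dhat_totally_bounded_general htb F hfin hgc α hα2
end
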